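/- Let f : ℝ³ → ℂ be continuously differentiable and compactly supported, and let v_f(t,x) := (1/4π) ∫_{S²} [ f(x+tω) + t ω·∇f(x+tω) ] dσ(ω) be the free cosine wave propagator applied to f. Then for every x ∈ ℝ³, ∫_0^∞ |v_f(t,x)| dt ≤ (1/2π) ∫_{ℝ³} |∇f(y)|/|x−y| dy. Consequently sup_{x ∈ ℝ³} ∫_0^∞ |v_f(t,x)| dt ≤ (1/2π) ‖∇f‖_K, the reversed space-time estimate ‖cos(t√(−Δ)) f‖_{L^∞_x L¹_t} ≲ ‖∇f‖_K. -/

import Mathlib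

set_option autoImplicit false

open MeasureTheory ENNReal Real

noncomputable section

/-- `ℝ³` as a Euclidean space. -/
abbrev R3 : Type := EuclideanSpace ℝ (Fin 3)

/-- The surface measure on the unit sphere `S² ⊂ ℝ³`. -/
def sphereMeasure : Measure (Metric.sphere (0 : R3) 1) :=
  (volume : Measure R3).toSphere

/-- The free cosine wave propagator (Kirchhoff formula):
`v_f(t,x) = (1/4π) ∫_{S²} [f(x+tω) + t ω·∇f(x+tω)] dσ(ω)`. -/
def cosProp (f : R3 → ℂ) (t : ℝ) (x : R3) : ℂ :=
  (1 / (4 * π)) • ∫ ω : Metric.sphere (0 : R3) 1,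
    (f (x + t • (ω : R3)) + t • (fderiv ℝ f (x + t • (ω : R3))) (ω : R3)) ∂sphereMeasure

/-- The (global) Kato norm of a function `V` on `ℝ³`:
`‖V‖_K = sup_y ∫ |V(x)| / |x - y| dx`. -/
def katoNorm {E : Type*} [NormedAddCommGroup E] (V : R3 → E) : ℝ≥0∞ :=
  ⨆ y : R3, ∫⁻ x : R3, (‖V x‖₊ : ℝ≥0∞) / (‖x - y‖₊ : ℝ≥0∞)

open Filter Set Bornology Module

/-! The Kirchhoff integrand is bounded by `|f(x+tω)| + t |∇f(x+tω)|`. Since `f` has compact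
support, the fundamental theorem of calculus along the ray `s ↦ x + sω` gives
`|f(x+tω)| ≤ ∫_t^∞ |∇f(x+sω)| ds`, and exchanging the order of integration turns
`∫_0^∞ ∫_t^∞ … ds dt` into `∫_0^∞ s … ds`. Both terms are therefore bounded by
`∫_{S²} ∫_0^∞ s |∇f(x+sω)| ds dσ(ω)`, which is `∫ |∇f(y)|/|y−x| dy` in polar coordinates
centred at `x` (the Jacobian `s²` against the kernel `1/s`); with the prefactor `1/(4π)`
this gives `1/(2π)`. -/

section Ray

variable {E F : Type*} [NormedAddCommGroup E] [NormedSpace ℝ E]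
  [NormedAddCommGroup F] [NormedSpace ℝ F] [CompleteSpace F]

theorem enorm_le_lintegral_Ioi_of_hasDerivAt {g g' : ℝ → F} (hg : ∀ s, HasDerivAt g (g' s) s)
    (hg' : Continuous g') (hzero : ∀ᶠ s in atTop, g s = 0) (t : ℝ) :
    ‖g t‖ₑ ≤ ∫⁻ s in Ioi t, ‖g' s‖ₑ := by
  obtain ⟨R, hR, htR⟩ := (hzero.and (eventually_ge_atTop t)).exists
  have hFTC : ∫ s in t..R, g' s = -g t := by
    rw [intervalIntegral.integral_eq_sub_of_hasDerivAt (fun s _ ↦ hg s)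
      (hg'.intervalIntegrable t R), hR, zero_sub]
  calc ‖g t‖ₑ = ‖∫ s in Ioc t R, g' s‖ₑ := by
        rw [← intervalIntegral.integral_of_le htR, hFTC, enorm_neg]
    _ ≤ ∫⁻ s in Ioc t R, ‖g' s‖ₑ := enorm_integral_le_lintegral_enorm _
    _ ≤ ∫⁻ s in Ioi t, ‖g' s‖ₑ := lintegral_mono_set Ioc_subset_Ioi_self

theorem tendsto_add_smul_atTop_cobounded (x : E) {ω : E} (hω : ω ≠ 0) :
    Tendsto (fun s : ℝ ↦ x + s • ω) atTop (cobounded E) := by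
  refine (tendsto_const_add_cobounded x).comp (tendsto_norm_atTop_iff_cobounded.1 ?_)
  simp only [norm_smul, Real.norm_eq_abs]
  exact tendsto_abs_atTop_atTop.atTop_mul_const (norm_pos_iff.2 hω)

theorem HasCompactSupport.enorm_le_lintegral_Ioi_fderiv_apply {f : E → F} (hf : ContDiff ℝ 1 f)
    (hsupp : HasCompactSupport f) (x : E) {ω : E} (hω : ω ≠ 0) (t : ℝ) :
    ‖f (x + t • ω)‖ₑ ≤ ∫⁻ s in Ioi t, ‖fderiv ℝ f (x + s • ω) ω‖ₑ := by
  refine enorm_le_lintegral_Ioi_of_hasDerivAt (g := fun s ↦ f (x + s • ω))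
    (g' := fun s ↦ fderiv ℝ f (x + s • ω) ω) (fun s ↦ ?_) ?_ ?_ t
  · have hline : HasDerivAt (fun s : ℝ ↦ x + s • ω) ω s := by
      simpa using ((hasDerivAt_id s).smul_const ω).const_add x
    exact ((hf.differentiable one_ne_zero _).hasFDerivAt).comp_hasDerivAt s hline
  · exact ((hf.continuous_fderiv one_ne_zero).comp (by fun_prop)).clm_apply continuous_const
  · have hcobdd : ∀ᶠ y in cobounded E, f y = 0 := by
      filter_upwards [isBounded_def.1 hsupp.isBounded] with y hy
      exact image_eq_zero_of_notMem_tsupport hy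
    exact (tendsto_add_smul_atTop_cobounded x hω).eventually hcobdd

theorem lintegral_Ioi_lintegral_Ioi (h : ℝ → ℝ≥0∞) (hm : Measurable h) :
    ∫⁻ t in Ioi 0, ∫⁻ s in Ioi t, h s = ∫⁻ s in Ioi 0, ENNReal.ofReal s * h s := by
  have hFm : Measurable (Function.uncurry fun t s : ℝ ↦ (Ioi t).indicator h s) :=
    (hm.comp measurable_snd).indicator (measurableSet_lt measurable_fst measurable_snd)
  calc ∫⁻ t in Ioi 0, ∫⁻ s in Ioi t, h s
      = ∫⁻ t in Ioi 0, ∫⁻ s in Ioi 0, (Ioi t).indicator h s := by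
        refine setLIntegral_congr_fun measurableSet_Ioi fun t ht ↦ ?_
        rw [lintegral_indicator measurableSet_Ioi, Measure.restrict_restrict measurableSet_Ioi,
          inter_eq_self_of_subset_left (Ioi_subset_Ioi (le_of_lt ht))]
    _ = ∫⁻ s in Ioi 0, ∫⁻ t in Ioi 0, (Ioi t).indicator h s :=
        lintegral_lintegral_swap hFm.aemeasurable
    _ = ∫⁻ s in Ioi 0, ENNReal.ofReal s * h s := by
        refine setLIntegral_congr_fun measurableSet_Ioi fun s hs ↦ ?_
        have : (fun t ↦ (Ioi t).indicator h s) = (Iio s).indicator fun _ ↦ h s := by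
          ext t; simp [indicator_apply]
        rw [this, lintegral_indicator_const measurableSet_Iio,
          Measure.restrict_apply measurableSet_Iio, Iio_inter_Ioi, Real.volume_Ioo, sub_zero, mul_comm]

theorem HasCompactSupport.lintegral_Ioi_enorm_add_le {f : E → F} (hf : ContDiff ℝ 1 f)
    (hsupp : HasCompactSupport f) (x : E) {ω : E} (hω : ‖ω‖ = 1) :
    ∫⁻ t in Ioi 0, (‖f (x + t • ω)‖ₑ + ENNReal.ofReal t * ‖fderiv ℝ f (x + t • ω)‖ₑ) ≤
      2 * ∫⁻ s in Ioi 0, ENNReal.ofReal s * ‖fderiv ℝ f (x + s • ω)‖ₑ := by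
  have hDf : Measurable fun s : ℝ ↦ ‖fderiv ℝ f (x + s • ω)‖ₑ :=
    ((hf.continuous_fderiv one_ne_zero).comp (by fun_prop)).measurable.enorm
  have hωₑ : ‖ω‖ₑ = 1 := by rw [← ofReal_norm, hω, ofReal_one]
  have hDf' : Measurable fun s : ℝ ↦ ENNReal.ofReal s * ‖fderiv ℝ f (x + s • ω)‖ₑ :=
    measurable_ofReal.mul hDf
  have hf_le : ∀ t : ℝ, ‖f (x + t • ω)‖ₑ ≤ ∫⁻ s in Ioi t, ‖fderiv ℝ f (x + s • ω)‖ₑ := by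
    intro t
    refine (hsupp.enorm_le_lintegral_Ioi_fderiv_apply hf x (by rintro rfl; simp at hω) t).trans
      (lintegral_mono fun s ↦ ?_)
    simpa [hωₑ] using (fderiv ℝ f (x + s • ω)).le_opENorm ω
  rw [lintegral_add_right _ hDf', two_mul]
  refine add_le_add ?_ le_rfl
  calc ∫⁻ t in Ioi 0, ‖f (x + t • ω)‖ₑ
      ≤ ∫⁻ t in Ioi 0, ∫⁻ s in Ioi t, ‖fderiv ℝ f (x + s • ω)‖ₑ := lintegral_mono fun t ↦ hf_le t
    _ = _ := lintegral_Ioi_lintegral_Ioi _ hDf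

end Ray

section Polar

variable {E : Type*} [NormedAddCommGroup E] [NormedSpace ℝ E] [FiniteDimensional ℝ E]
  [MeasurableSpace E] [BorelSpace E] (μ : Measure E) [μ.IsAddHaarMeasure]

open Module

theorem lintegral_eq_lintegral_toSphere_Ioi [Nontrivial E] {F : E → ℝ≥0∞} (hF : Measurable F) :
    ∫⁻ y, F y ∂μ = ∫⁻ ω : Metric.sphere (0 : E) 1,
      (∫⁻ s in Ioi (0 : ℝ), ENNReal.ofReal (s ^ (finrank ℝ E - 1)) * F (s • (ω : E)))
        ∂μ.toSphere := by
  have hH : Measurable fun p : Metric.sphere (0 : E) 1 × Ioi (0 : ℝ) ↦ F (p.2.1 • p.1.1) := by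
    fun_prop
  have key := μ.measurePreserving_homeomorphUnitSphereProd.lintegral_comp hH
  have hrescale : ∀ y : ({0}ᶜ : Set E), ‖(y : E)‖ • ‖(y : E)‖⁻¹ • (y : E) = y :=
    fun y ↦ smul_inv_smul₀ (norm_ne_zero_iff.2 y.2) _
  simp only [homeomorphUnitSphereProd_apply_snd_coe, homeomorphUnitSphereProd_apply_fst_coe,
    hrescale] at key
  rw [lintegral_subtype_comap (measurableSet_singleton 0).compl (fun y ↦ F y),
    restrict_compl_singleton] at key
  rw [key, lintegral_prod _ hH.aemeasurable]
  refine lintegral_congr fun ω ↦ ?_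
  rw [Measure.volumeIoiPow, lintegral_withDensity_eq_lintegral_mul _ (by fun_prop) (by fun_prop)]
  exact lintegral_subtype_comap measurableSet_Ioi
    (fun s : ℝ ↦ ENNReal.ofReal (s ^ (finrank ℝ E - 1)) * F (s • (ω : E)))

theorem lintegral_div_enorm_sub_eq_lintegral_toSphere (hd : 1 < finrank ℝ E) {G : E → ℝ≥0∞} (hG : Measurable G)
    (x : E) :
    ∫⁻ y, G y / ‖y - x‖ₑ ∂μ = ∫⁻ ω : Metric.sphere (0 : E) 1,
      (∫⁻ s in Ioi (0 : ℝ), ENNReal.ofReal (s ^ (finrank ℝ E - 2)) * G (x + s • (ω : E)))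
        ∂μ.toSphere := by
  have : Nontrivial E := Module.nontrivial_of_finrank_pos (R := ℝ) (by omega)
  rw [← lintegral_add_left_eq_self _ x, lintegral_eq_lintegral_toSphere_Ioi μ (by fun_prop)]
  refine lintegral_congr fun ω ↦ setLIntegral_congr_fun measurableSet_Ioi fun s (hs : 0 < s) ↦ ?_
  have hs' : ENNReal.ofReal s ≠ 0 := by simpa using hs
  have hnorm : ‖x + s • (ω : E) - x‖ₑ = ENNReal.ofReal s := by
    rw [add_sub_cancel_left, ← ofReal_norm, norm_smul, norm_eq_of_mem_sphere, mul_one,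
      Real.norm_of_nonneg hs.le]
  rw [hnorm, show finrank ℝ E - 1 = finrank ℝ E - 2 + 1 by omega, pow_succ,
    ENNReal.ofReal_mul (by positivity), mul_assoc, ENNReal.mul_div_cancel hs' ofReal_ne_top]

theorem integrable_norm_div_norm_sub (hd : 1 < finrank ℝ E) {G : Type*} [NormedAddCommGroup G]
    {g : E → G} (hg : Continuous g) (hgs : HasCompactSupport g) (x : E) :
    Integrable (fun y ↦ ‖g y‖ / ‖x - y‖) μ := by
  have hkernel : LocallyIntegrable (fun z : E ↦ ‖z‖⁻¹) μ :=
    locallyIntegrable_of_norm_le_rpow (C := 1) (α := 1) hd.le (by exact_mod_cast hd)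
      (ae_of_all _ fun z ↦ by simp [Real.rpow_neg_one]) (by fun_prop)
  have := (hkernel.integrable_smul_right_of_hasCompactSupport (g := fun z ↦ ‖g (x - z)‖)
    (by fun_prop) (hgs.comp_homeomorph (Homeomorph.subLeft x)).norm).comp_sub_left x
  simpa [div_eq_inv_mul] using this

theorem ofReal_integral_norm_div_norm_sub (hd : 1 < finrank ℝ E) {G : Type*}
    [NormedAddCommGroup G] {g : E → G} (hg : Continuous g) (hgs : HasCompactSupport g) (x : E) :
    ENNReal.ofReal (∫ y, ‖g y‖ / ‖x - y‖ ∂μ) = ∫⁻ y, ‖g y‖ₑ / ‖y - x‖ₑ ∂μ := by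
  have : Nontrivial E := Module.nontrivial_of_finrank_pos (R := ℝ) (by omega)
  rw [ofReal_integral_eq_lintegral_ofReal (integrable_norm_div_norm_sub μ hd hg hgs x)
    (ae_of_all _ fun y ↦ by positivity)]
  refine lintegral_congr_ae ?_
  filter_upwards [compl_mem_ae_iff.2 (measure_singleton x)] with y (hy : y ≠ x)
  rw [ENNReal.ofReal_div_of_pos (norm_pos_iff.2 (sub_ne_zero.2 hy.symm)), ofReal_norm,
    ofReal_norm, enorm_sub_rev]

end Polar

instance : IsFiniteMeasure sphereMeasure := by
  unfold sphereMeasure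
  infer_instance

theorem enorm_cosProp_le (f : R3 → ℂ) {t : ℝ} (ht : 0 ≤ t) (x : R3) :
    ‖cosProp f t x‖ₑ ≤ ENNReal.ofReal (1 / (4 * π)) * ∫⁻ ω : Metric.sphere (0 : R3) 1,
      (‖f (x + t • (ω : R3))‖ₑ + ENNReal.ofReal t * ‖fderiv ℝ f (x + t • (ω : R3))‖ₑ)
        ∂sphereMeasure := by
  rw [cosProp, enorm_smul, Real.enorm_of_nonneg (by positivity)]
  refine mul_le_mul_right
    ((enorm_integral_le_lintegral_enorm _).trans (lintegral_mono fun ω ↦ ?_)) _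
  refine (enorm_add_le _ _).trans (add_le_add le_rfl ?_)
  rw [enorm_smul, Real.enorm_of_nonneg ht]
  have hω : ‖(ω : R3)‖ₑ = 1 := by rw [← ofReal_norm, norm_eq_of_mem_sphere, ofReal_one]
  gcongr
  simpa [hω] using (fderiv ℝ f (x + t • (ω : R3))).le_opENorm ω

theorem lintegral_enorm_cosProp_le {f : R3 → ℂ} (hf : ContDiff ℝ 1 f) (hsupp : HasCompactSupport f)
    (x : R3) :
    ∫⁻ t in Ioi 0, ‖cosProp f t x‖ₑ ≤
      ENNReal.ofReal (1 / (2 * π)) * ∫⁻ y, ‖fderiv ℝ f y‖ₑ / ‖y - x‖ₑ := by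
  have hd : finrank ℝ R3 = 3 := finrank_euclideanSpace_fin
  have hf' := hf.continuous_fderiv one_ne_zero
  set K : ℝ → Metric.sphere (0 : R3) 1 → ℝ≥0∞ := fun t ω ↦
    ‖f (x + t • (ω : R3))‖ₑ + ENNReal.ofReal t * ‖fderiv ℝ f (x + t • (ω : R3))‖ₑ
  have hK : Measurable (Function.uncurry K) := by
    have := hf.continuous.measurable
    have := hf'.measurable
    show Measurable fun p : ℝ × Metric.sphere (0 : R3) 1 ↦ K p.1 p.2
    simp only [K]
    fun_prop
  calc ∫⁻ t in Ioi 0, ‖cosProp f t x‖ₑ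
      ≤ ∫⁻ t in Ioi 0, ENNReal.ofReal (1 / (4 * π)) * ∫⁻ ω, K t ω ∂sphereMeasure :=
        setLIntegral_mono' measurableSet_Ioi fun t ht ↦ enorm_cosProp_le f (le_of_lt ht) x
    _ = ENNReal.ofReal (1 / (4 * π)) * ∫⁻ ω, (∫⁻ t in Ioi 0, K t ω) ∂sphereMeasure := by
        rw [lintegral_const_mul' _ _ ofReal_ne_top, lintegral_lintegral_swap hK.aemeasurable]
    _ ≤ ENNReal.ofReal (1 / (4 * π)) * ∫⁻ ω, 2 * (∫⁻ s in Ioi 0,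
          ENNReal.ofReal s * ‖fderiv ℝ f (x + s • (ω : R3))‖ₑ) ∂sphereMeasure := by
        gcongr with ω
        exact hsupp.lintegral_Ioi_enorm_add_le hf x (norm_eq_of_mem_sphere ω)
    _ = ENNReal.ofReal (1 / (2 * π)) * ∫⁻ y, ‖fderiv ℝ f y‖ₑ / ‖y - x‖ₑ := by
        have hconst : ENNReal.ofReal (1 / (4 * π)) * 2 = ENNReal.ofReal (1 / (2 * π)) := by
          rw [← ofReal_ofNat 2, ← ENNReal.ofReal_mul (by positivity)]
          congr 1
          field_simp
          ring
        rw [lintegral_const_mul' _ _ ofNat_ne_top, ← mul_assoc, hconst, sphereMeasure,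
          lintegral_div_enorm_sub_eq_lintegral_toSphere volume (by omega) (by fun_prop) x, hd]
        norm_num

theorem cosine_reversed_Linfty_L1_kato (f : R3 → ℂ) (hf : ContDiff ℝ 1 f)
    (hsupp : HasCompactSupport f) :
    (∀ x : R3,
      ∫⁻ t in Set.Ioi (0 : ℝ), (‖cosProp f t x‖₊ : ℝ≥0∞) ≤
        ENNReal.ofReal ((1 / (2 * π)) * ∫ y : R3, ‖fderiv ℝ f y‖ / ‖x - y‖)) ∧
    (⨆ x : R3, ∫⁻ t in Set.Ioi (0 : ℝ), (‖cosProp f t x‖₊ : ℝ≥0∞)) ≤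
      (ENNReal.ofReal (2 * π))⁻¹ * katoNorm (fun y => fderiv ℝ f y) := by
  have hd : 1 < finrank ℝ R3 := by simp
  refine ⟨fun x ↦ ?_, iSup_le fun x ↦ ?_⟩
  · rw [ENNReal.ofReal_mul (by positivity), ofReal_integral_norm_div_norm_sub volume hd
      (hf.continuous_fderiv one_ne_zero) (hsupp.fderiv (𝕜 := ℝ)) x]
    exact lintegral_enorm_cosProp_le hf hsupp x
  · rw [← ENNReal.ofReal_inv_of_pos (by positivity), ← one_div]
    exact (lintegral_enorm_cosProp_le hf hsupp x).trans
      (mul_le_mul_right (le_iSup (fun y ↦ ∫⁻ z, ‖fderiv ℝ f z‖ₑ / ‖z - y‖ₑ) x) _)
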